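/- arXiv:2512.04782 — 2 statements merged into one kernel-verified Lean document; each statement's English description precedes it below -/
import Mathlib

section
/- Assume the solid inclusion in the unit cell is cylindrical, i.e. $Y_s = Y_s' \times (0,1)$ with $Y_s' \subset (0,1)^{n-1}$ strictly included, so $Y_f = Y \setminus \overline{Y_s}$. Let $(w_i, q_i)$ for $i = 1,\dots,n$ be the Stokes cell solutions and $K_{ij} = \int_{Y_f} \nabla w_i : \nabla w_j \, dy$ the permeability tensor. Then for each $i = 1,\dots,n-1$: the cell solution $w_i$ is constant with respect to $y_n$, its $n$-th component $w_i^n$ vanishes, and consequently $K_{in} = K_{ni} = 0$; hence $K$ has block-diagonal structure $K = \begin{pmatrix} \bar K & 0 \\ 0 & K_{nn} \end{pmatrix}$ with $\bar K \in \mathbb{R}^{(n-1)\times(n-1)}$. -/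
open MeasureTheory Set Filter Topology

noncomputable section

abbrev Pt (n : ℕ) := Fin (n + 1) → ℝ

def unitCube (n : ℕ) : Set (Pt n) := {y | ∀ i, y i ∈ Ioo (0 : ℝ) 1}

def YPer {n : ℕ} (f : Pt n → ℝ) : Prop :=
  ∀ (y : Pt n) (k : Fin (n + 1) → ℤ), f (y + fun i => (k i : ℝ)) = f y

def gradMat {n : ℕ} (w : Pt n → Pt n) (x : Pt n) (j k : Fin (n + 1)) : ℝ :=
  fderiv ℝ (fun y => w y k) x (Pi.single j 1)

def CellAdm {n : ℕ} (Γ : Set (Pt n)) (φ : Pt n → Pt n) : Prop :=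
  (∀ k, ContDiff ℝ (⊤ : ℕ∞) (fun y => φ y k)) ∧ (∀ k, YPer (fun y => φ y k)) ∧
  (∀ x, ∑ j, gradMat φ x j j = 0) ∧ (∀ x ∈ Γ, φ x = 0)

def CellWeakSol {n : ℕ} (Yf Γ : Set (Pt n)) (i : Fin (n + 1)) (w : Pt n → Pt n) : Prop :=
  CellAdm Γ w ∧
  ∀ φ : Pt n → Pt n, CellAdm Γ φ →
    ∫ x in Yf, ∑ j, ∑ k, gradMat w x j k * gradMat φ x j k = ∫ x in Yf, φ x i

/-- The cylindrical solid inclusion `Y_s = Y_s' × (0,1)`. -/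
def cylSolid {n : ℕ} (Ys' : Set (Fin n → ℝ)) : Set (Pt n) :=
  {x | (fun i => x (Fin.castSucc i)) ∈ Ys' ∧ x (Fin.last n) ∈ Ioo (0 : ℝ) 1}

section Aux

variable {n : ℕ}

def Em (n : ℕ) := MeasurableEquiv.piFinSuccAbove (fun _ : Fin (n+1) => ℝ) (Fin.last n)

lemma cont_insertNth_aux (n : ℕ) :
    Continuous fun p : ℝ × (Fin n → ℝ) => ((Fin.last n).insertNth p.1 p.2 : Pt n) :=
  Continuous.finInsertNth (A := fun _ : Fin (n+1) => ℝ) (Fin.last n)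
    continuous_fst continuous_snd

def Hm (n : ℕ) : Pt n ≃ₜ ℝ × (Fin n → ℝ) where
  toEquiv := (Em n).toEquiv
  continuous_toFun := by
    show Continuous fun x : Pt n => (x (Fin.last n), (Fin.last n).removeNth x)
    exact (continuous_apply _).prodMk (continuous_pi fun j => continuous_apply _)
  continuous_invFun := cont_insertNth_aux n

lemma em_eq_hm : ⇑(Em n) = ⇑(Hm n) := rfl
lemma em_symm_eq_hm : ⇑(Em n).symm = ⇑(Hm n).symm := rfl
example : MeasurePreserving (Em n) volume volume := volume_preserving_piFinSuccAbove _ _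

lemma hm_apply (x : Pt n) : Hm n x = (x (Fin.last n), fun j => x (Fin.castSucc j)) := by
  show (x (Fin.last n), (Fin.last n).removeNth x) = _
  refine Prod.ext rfl ?_
  funext j
  show x ((Fin.last n).succAbove j) = _
  rw [Fin.succAbove_last]

lemma hm_symm_apply (p : ℝ × (Fin n → ℝ)) : (Hm n).symm p = ((Fin.last n).insertNth p.1 p.2 : Pt n) := rfl

-- membership transfer
lemma mem_hm_preimage {A : Set ℝ} {B : Set (Fin n → ℝ)} {x : Pt n} :
    x ∈ (Hm n) ⁻¹' (A ×ˢ B) ↔ x (Fin.last n) ∈ A ∧ (fun j => x (Fin.castSucc j)) ∈ B := by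
  simp only [Set.mem_preimage, hm_apply, Set.mem_prod]

lemma cylSolid_eq (Ys' : Set (Fin n → ℝ)) :
    cylSolid Ys' = (Hm n) ⁻¹' ((Ioo (0:ℝ) 1) ×ˢ Ys') := by
  ext x; rw [mem_hm_preimage]; exact ⟨fun h => ⟨h.2, h.1⟩, fun h => ⟨h.2, h.1⟩⟩

lemma unitCube_eq :
    unitCube n = (Hm n) ⁻¹' ((Ioo (0:ℝ) 1) ×ˢ {z : Fin n → ℝ | ∀ j, z j ∈ Ioo (0:ℝ) 1}) := by
  ext x
  rw [mem_hm_preimage]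
  constructor
  · exact fun h => ⟨h _, fun j => h _⟩
  · rintro ⟨h1, h2⟩ i
    induction i using Fin.lastCases with
    | last => exact h1
    | cast j => exact h2 j

lemma closure_cylSolid (Ys' : Set (Fin n → ℝ)) :
    closure (cylSolid Ys') = (Hm n) ⁻¹' ((Icc (0:ℝ) 1) ×ˢ closure Ys') := by
  rw [cylSolid_eq, ← Homeomorph.preimage_closure, closure_prod_eq, closure_Ioo one_ne_zero.symm]

/-- the fluid part of the cross-section -/
def Yfp {n : ℕ} (Ys' : Set (Fin n → ℝ)) : Set (Fin n → ℝ) :=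
  {z | (∀ j, z j ∈ Ioo (0:ℝ) 1) ∧ z ∉ closure Ys'}

lemma Yf_eq (Ys' : Set (Fin n → ℝ)) :
    unitCube n \ closure (cylSolid Ys') = (Hm n) ⁻¹' ((Ioo (0:ℝ) 1) ×ˢ Yfp Ys') := by
  rw [unitCube_eq, closure_cylSolid]
  ext x
  simp only [Set.mem_diff, mem_hm_preimage, Yfp, Set.mem_setOf_eq]
  constructor
  · rintro ⟨⟨h1, h2⟩, h3⟩
    refine ⟨h1, h2, fun hc => h3 ⟨Ioo_subset_Icc_self h1, hc⟩⟩
  · rintro ⟨h1, h2, h3⟩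
    exact ⟨⟨h1, h2⟩, fun hc => h3 hc.2⟩

lemma closure_Yf (Ys' : Set (Fin n → ℝ)) :
    closure (unitCube n \ closure (cylSolid Ys')) =
      (Hm n) ⁻¹' ((Icc (0:ℝ) 1) ×ˢ closure (Yfp Ys')) := by
  rw [Yf_eq, ← Homeomorph.preimage_closure, closure_prod_eq, closure_Ioo one_ne_zero.symm]

lemma Gamma_eq (Ys' : Set (Fin n → ℝ)) :
    closure (unitCube n \ closure (cylSolid Ys')) ∩ closure (cylSolid Ys') =
      (Hm n) ⁻¹' ((Icc (0:ℝ) 1) ×ˢ (closure (Yfp Ys') ∩ closure Ys')) := by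
  rw [closure_Yf, closure_cylSolid]
  ext x
  simp only [Set.mem_inter_iff, mem_hm_preimage]
  tauto

def eL (n : ℕ) : Pt n := Pi.single (Fin.last n) 1

lemma eL_last : eL n (Fin.last n) = 1 := Pi.single_eq_same _ _
lemma eL_ne {j : Fin (n+1)} (h : j ≠ Fin.last n) : eL n j = 0 := Pi.single_eq_of_ne h _

lemma hm_update (x : Pt n) (t : ℝ) :
    Hm n (Function.update x (Fin.last n) t) = (t, (Hm n x).2) := by
  rw [hm_apply, hm_apply]
  refine Prod.ext (Function.update_self _ _ _) ?_
  funext j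
  exact Function.update_of_ne (Fin.castSucc_lt_last j).ne _ _

lemma hm_add_single (x : Pt n) (s : ℝ) :
    Hm n (x + s • eL n) = (x (Fin.last n) + s, (Hm n x).2) := by
  rw [hm_apply, hm_apply]
  refine Prod.ext ?_ ?_
  · show x (Fin.last n) + s * eL n (Fin.last n) = _
    rw [eL_last]; ring
  · funext j
    show x (Fin.castSucc j) + s * eL n (Fin.castSucc j) = x (Fin.castSucc j)
    rw [eL_ne (Fin.castSucc_lt_last j).ne]; ring

lemma add_single_eq_update (x : Pt n) (s : ℝ) :
    x + s • eL n = Function.update x (Fin.last n) (x (Fin.last n) + s) := by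
  funext j
  by_cases h : j = Fin.last n
  · subst h
    show x (Fin.last n) + s * eL n (Fin.last n) = _
    rw [eL_last, Function.update_self]; ring
  · show x j + s * eL n j = _
    rw [eL_ne h, Function.update_of_ne h]; ring
lemma per1 (g : ℝ → ℝ) (hg : ∀ t, g (t + 1) = g t) (s : ℝ) :
    ∫ t in Ioo (0:ℝ) 1, g (t + s) = ∫ t in Ioo (0:ℝ) 1, g t := by
  rw [← integral_Ioc_eq_integral_Ioo, ← integral_Ioc_eq_integral_Ioo,
    ← intervalIntegral.integral_of_le zero_le_one, ← intervalIntegral.integral_of_le zero_le_one,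
    intervalIntegral.integral_comp_add_right]
  have hper : Function.Periodic g 1 := hg
  have h := hper.intervalIntegral_add_eq s 0
  rw [zero_add] at h
  rw [← h]
  norm_num [add_comm]

lemma refl1 (g : ℝ → ℝ) :
    ∫ t in Ioo (0:ℝ) 1, g (1 - t) = ∫ t in Ioo (0:ℝ) 1, g t := by
  rw [← integral_Ioc_eq_integral_Ioo, ← integral_Ioc_eq_integral_Ioo,
    ← intervalIntegral.integral_of_le zero_le_one, ← intervalIntegral.integral_of_le zero_le_one,
    intervalIntegral.integral_comp_sub_left]
  norm_num

lemma my_setIntegral_prod_symm {α β : Type*} [MeasurableSpace α] [MeasurableSpace β]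
    {μ : Measure α} {ν : Measure β} [SFinite μ] [SFinite ν]
    (f : α × β → ℝ) {s : Set α} {t : Set β}
    (hf : IntegrableOn f (s ×ˢ t) (μ.prod ν)) :
    ∫ z in s ×ˢ t, f z ∂(μ.prod ν) = ∫ y in t, ∫ x in s, f (x, y) ∂μ ∂ν := by
  simp only [← Measure.prod_restrict s t, IntegrableOn] at hf ⊢
  exact integral_prod_symm f hf

/-- Fubini over the cylinder set, for continuous integrands. -/
lemma fub (B : Set (Fin n → ℝ)) (hB : B ⊆ Icc 0 1)
    (G : Pt n → ℝ) (hG : Continuous G) :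
    ∫ x in (Hm n) ⁻¹' ((Ioo (0:ℝ) 1) ×ˢ B), G x =
      ∫ y in B, ∫ t in Ioo (0:ℝ) 1, G ((Hm n).symm (t, y)) := by
  have hvp : MeasurePreserving (Em n) volume volume := volume_preserving_piFinSuccAbove _ _
  have hemb : MeasurableEmbedding (Em n) := (Em n).measurableEmbedding
  have key := hvp.setIntegral_preimage_emb hemb (fun p => G ((Hm n).symm p))
    ((Ioo (0:ℝ) 1) ×ˢ B)
  rw [em_eq_hm] at key
  simp only [Homeomorph.symm_apply_apply] at key
  rw [key]
  have hfc : Continuous fun p : ℝ × (Fin n → ℝ) => G ((Hm n).symm p) :=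
    hG.comp (Hm n).symm.continuous
  have hK : IsCompact ((Icc (0:ℝ) 1) ×ˢ (Icc (0:Fin n → ℝ) 1)) :=
    isCompact_Icc.prod isCompact_Icc
  have hint : IntegrableOn (fun p : ℝ × (Fin n → ℝ) => G ((Hm n).symm p))
      ((Ioo (0:ℝ) 1) ×ˢ B) volume :=
    (hfc.continuousOn.integrableOn_compact hK).mono_set
      (prod_mono Ioo_subset_Icc_self hB)
  rw [Measure.volume_eq_prod] at hint ⊢
  exact my_setIntegral_prod_symm _ hint
lemma symm_last (t : ℝ) (y : Fin n → ℝ) : ((Hm n).symm (t, y)) (Fin.last n) = t := by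
  have h := hm_apply ((Hm n).symm (t, y))
  rw [Homeomorph.apply_symm_apply] at h
  exact (congrArg Prod.fst h).symm

lemma symm_shift (t s : ℝ) (y : Fin n → ℝ) :
    (Hm n).symm (t, y) + s • eL n = (Hm n).symm (t + s, y) := by
  apply (Hm n).injective
  rw [hm_add_single, Homeomorph.apply_symm_apply, Homeomorph.apply_symm_apply, symm_last]

def reflPt {n : ℕ} (x : Pt n) : Pt n := Function.update x (Fin.last n) (1 - x (Fin.last n))

lemma reflPt_continuous : Continuous (reflPt (n := n)) :=
  continuous_id.update (Fin.last n) (continuous_const.sub (continuous_apply _))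

lemma reflPt_invol (x : Pt n) : reflPt (reflPt x) = x := by
  funext j
  by_cases h : j = Fin.last n
  · subst h
    simp [reflPt, Function.update_self]
  · simp [reflPt, Function.update_of_ne h]

lemma symm_refl (t : ℝ) (y : Fin n → ℝ) :
    reflPt ((Hm n).symm (t, y)) = (Hm n).symm (1 - t, y) := by
  apply (Hm n).injective
  rw [reflPt, hm_update, Homeomorph.apply_symm_apply, Homeomorph.apply_symm_apply, symm_last]

lemma shiftInt (B : Set (Fin n → ℝ)) (hB : B ⊆ Icc 0 1)
    (G : Pt n → ℝ) (hG : Continuous G) (hper : ∀ x, G (x + eL n) = G x) (s : ℝ) :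
    ∫ x in (Hm n) ⁻¹' ((Ioo (0:ℝ) 1) ×ˢ B), G (x + s • eL n) =
      ∫ x in (Hm n) ⁻¹' ((Ioo (0:ℝ) 1) ×ˢ B), G x := by
  rw [fub B hB (fun x => G (x + s • eL n))
    (by exact hG.comp (continuous_id.add continuous_const)), fub B hB G hG]
  refine congrArg (integral _) (funext fun y => ?_)
  simp only [symm_shift]
  exact per1 (fun t => G ((Hm n).symm (t, y)))
    (fun t => by show G ((Hm n).symm (t + 1, y)) = _; rw [← symm_shift, one_smul, hper]) s

lemma reflInt (B : Set (Fin n → ℝ)) (hB : B ⊆ Icc 0 1)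
    (G : Pt n → ℝ) (hG : Continuous G) :
    ∫ x in (Hm n) ⁻¹' ((Ioo (0:ℝ) 1) ×ˢ B), G (reflPt x) =
      ∫ x in (Hm n) ⁻¹' ((Ioo (0:ℝ) 1) ×ˢ B), G x := by
  rw [fub B hB (fun x => G (reflPt x)) (by exact hG.comp reflPt_continuous), fub B hB G hG]
  refine congrArg (integral _) (funext fun y => ?_)
  simp only [symm_refl]
  exact refl1 (fun t => G ((Hm n).symm (t, y)))

/-! calculus lemmas -/

lemma fderiv_shift (f : Pt n → ℝ) (hf : Differentiable ℝ f) (c x : Pt n) :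
    fderiv ℝ (fun y => f (y + c)) x = fderiv ℝ f (x + c) := by
  have h1 : HasFDerivAt (fun y : Pt n => y + c) (ContinuousLinearMap.id ℝ (Pt n)) x :=
    (hasFDerivAt_id x).add_const c
  have h2 : HasFDerivAt (fun y : Pt n => f (y + c))
      ((fderiv ℝ f (x + c)).comp (ContinuousLinearMap.id ℝ (Pt n))) x :=
    (hf (x + c)).hasFDerivAt.comp x h1
  rw [h2.fderiv, ContinuousLinearMap.comp_id]

def Lr (n : ℕ) : Pt n →L[ℝ] Pt n :=
  ContinuousLinearMap.pi (fun m => if m = Fin.last n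
    then -(ContinuousLinearMap.proj (R := ℝ) (φ := fun _ : Fin (n+1) => ℝ) (Fin.last n))
    else ContinuousLinearMap.proj m)

lemma Lr_apply (x : Pt n) (m : Fin (n+1)) :
    Lr n x m = if m = Fin.last n then -(x (Fin.last n)) else x m := by
  by_cases h : m = Fin.last n <;>
    simp [Lr, ContinuousLinearMap.pi_apply, h]

lemma reflPt_eq_affine : reflPt (n := n) = fun y => Lr n y + eL n := by
  funext x j
  show Function.update x (Fin.last n) (1 - x (Fin.last n)) j = Lr n x j + eL n j
  by_cases h : j = Fin.last n
  · subst h; rw [Function.update_self, Lr_apply, if_pos rfl, eL_last]; ring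
  · rw [Function.update_of_ne h, Lr_apply, if_neg h, eL_ne h]; ring

lemma hasFDeriv_reflPt (x : Pt n) : HasFDerivAt (reflPt (n := n)) (Lr n) x := by
  rw [reflPt_eq_affine]
  exact (Lr n).hasFDerivAt.add_const (eL n)

lemma reflPt_contDiff : ContDiff ℝ (⊤ : ℕ∞) (reflPt (n := n)) := by
  rw [reflPt_eq_affine]
  exact (Lr n).contDiff.add contDiff_const

lemma fderiv_refl (f : Pt n → ℝ) (hf : Differentiable ℝ f) (x : Pt n) :
    fderiv ℝ (fun y => f (reflPt y)) x = (fderiv ℝ f (reflPt x)).comp (Lr n) :=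
  ((hf (reflPt x)).hasFDerivAt.comp x (hasFDeriv_reflPt x)).fderiv

lemma Lr_single (j : Fin (n+1)) :
    Lr n (Pi.single j 1) =
      (if j = Fin.last n then (-1:ℝ) else 1) • (Pi.single j 1 : Pt n) := by
  funext m
  rw [Lr_apply]
  by_cases hm : m = Fin.last n <;> by_cases hj : j = Fin.last n <;>
    simp [hm, hj, Pi.single_apply]
/-! gradMat transformation lemmas -/

lemma gradMat_shift (w : Pt n → Pt n) (hw : ∀ k, ContDiff ℝ (⊤ : ℕ∞) (fun y => w y k))
    (c x : Pt n) (j k : Fin (n+1)) :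
    gradMat (fun y => w (y + c)) x j k = gradMat w (x + c) j k := by
  unfold gradMat
  rw [fderiv_shift (fun y => w y k) ((hw k).differentiable (by simp)) c x]

def sgn (n : ℕ) (k : Fin (n+1)) : ℝ := if k = Fin.last n then -1 else 1

def reflVF {n : ℕ} (w : Pt n → Pt n) : Pt n → Pt n := fun y k => sgn n k * w (reflPt y) k

lemma gradMat_reflVF (w : Pt n → Pt n) (hw : ∀ k, ContDiff ℝ (⊤ : ℕ∞) (fun y => w y k))
    (x : Pt n) (j k : Fin (n+1)) :
    gradMat (reflVF w) x j k = sgn n k * (sgn n j * gradMat w (reflPt x) j k) := by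
  unfold gradMat reflVF
  have hda : DifferentiableAt ℝ (fun y => w (reflPt y) k) x :=
    ((((hw k).differentiable (by simp)) (reflPt x)).hasFDerivAt.comp x
      (hasFDeriv_reflPt x)).differentiableAt
  rw [show (fun y => sgn n k * w (reflPt y) k) = fun y => sgn n k * (fun z => w (reflPt z) k) y
      from rfl]
  rw [fderiv_const_mul hda, ContinuousLinearMap.smul_apply, smul_eq_mul,
    fderiv_refl (fun y => w y k) ((hw k).differentiable (by simp)) x,
    ContinuousLinearMap.comp_apply, Lr_single, ContinuousLinearMap.map_smul, smul_eq_mul]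
  rfl

lemma intvec_single : (fun i : Fin (n+1) => (((Pi.single (Fin.last n) 1 : Fin (n+1) → ℤ) i : ℤ) : ℝ))
    = eL n := by
  funext i
  by_cases h : i = Fin.last n
  · subst h; simp [Pi.single_eq_same, eL_last]
  · simp [Pi.single_eq_of_ne h, eL_ne h]

lemma w_per_eL (w : Pt n → Pt n) (hper : ∀ k, YPer (fun y => w y k)) (x : Pt n) :
    w (x + eL n) = w x := by
  funext k
  have := hper k x (Pi.single (Fin.last n) 1)
  rwa [intvec_single] at this

lemma gradMat_per_eL (w : Pt n → Pt n) (hw : ∀ k, ContDiff ℝ (⊤ : ℕ∞) (fun y => w y k))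
    (hper : ∀ k, YPer (fun y => w y k)) (x : Pt n) (j k : Fin (n+1)) :
    gradMat w (x + eL n) j k = gradMat w x j k := by
  have h1 : (fun y : Pt n => w (y + eL n) k) = (fun y => w y k) := by
    funext y
    rw [w_per_eL w hper y]
  unfold gradMat
  rw [← fderiv_shift (fun y => w y k) ((hw k).differentiable (by simp)) (eL n) x, h1]

/-- vanishing on Γ of arbitrary last-coordinate shifts -/
lemma shift_vanish {Γ : Set (Pt n)} (w : Pt n → Pt n)
    (hper : ∀ k, YPer (fun y => w y k)) (hbd : ∀ x ∈ Γ, w x = 0)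
    (hΓcyl : ∀ x ∈ Γ, ∀ t ∈ Icc (0:ℝ) 1, Function.update x (Fin.last n) t ∈ Γ)
    (s : ℝ) : ∀ x ∈ Γ, w (x + s • eL n) = 0 := by
  intro x hx
  set r : ℝ := x (Fin.last n) + s with hr
  have hsplit : x + s • eL n =
      Function.update x (Fin.last n) (Int.fract r) + (fun i => (((Pi.single (Fin.last n) ⌊r⌋ :
        Fin (n+1) → ℤ) i : ℤ) : ℝ)) := by
    rw [add_single_eq_update]
    funext j
    by_cases h : j = Fin.last n
    · subst h
      simp only [Function.update_self, Pi.add_apply, Pi.single_eq_same]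
      rw [← hr, Int.fract]
      push_cast
      ring
    · simp only [Function.update_of_ne h, Pi.add_apply, Pi.single_eq_of_ne h]
      norm_num
  have hmem : Function.update x (Fin.last n) (Int.fract r) ∈ Γ :=
    hΓcyl x hx _ ⟨Int.fract_nonneg r, (Int.fract_lt_one r).le⟩
  funext k
  have hp := hper k (Function.update x (Fin.last n) (Int.fract r)) (Pi.single (Fin.last n) ⌊r⌋)
  rw [hsplit]
  show (fun y => w y k) (Function.update x (Fin.last n) (Int.fract r) +
    fun i => (((Pi.single (Fin.last n) ⌊r⌋ : Fin (n+1) → ℤ) i : ℤ) : ℝ)) = (0 : Pt n) k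
  rw [hp]
  show w _ k = _
  rw [hbd _ hmem]
lemma shift_cancel (x : Pt n) (s : ℝ) : x + s • eL n + (-s) • eL n = x := by
  rw [add_assoc, ← add_smul]
  simp

lemma adm_shift {Γ : Set (Pt n)}
    (hΓcyl : ∀ x ∈ Γ, ∀ t ∈ Icc (0:ℝ) 1, Function.update x (Fin.last n) t ∈ Γ)
    (φ : Pt n → Pt n) (hφ : CellAdm Γ φ) (s : ℝ) :
    CellAdm Γ (fun y => φ (y + s • eL n)) := by
  obtain ⟨hsm, hper, hdiv, hbd⟩ := hφ
  refine ⟨?_, ?_, ?_, ?_⟩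
  · intro k
    exact (hsm k).comp (contDiff_id.add contDiff_const)
  · intro k y kv
    show φ ((y + fun i => ((kv i : ℤ) : ℝ)) + s • eL n) k = φ (y + s • eL n) k
    rw [add_right_comm]
    exact hper k (y + s • eL n) kv
  · intro x
    have h : ∀ j k, gradMat (fun y => φ (y + s • eL n)) x j k = gradMat φ (x + s • eL n) j k :=
      gradMat_shift φ hsm _ x
    calc ∑ j, gradMat (fun y => φ (y + s • eL n)) x j j
        = ∑ j, gradMat φ (x + s • eL n) j j := by
          exact Finset.sum_congr rfl fun j _ => h j j
      _ = 0 := hdiv _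
  · exact fun x hx => shift_vanish φ hper hbd hΓcyl s x hx

lemma adm_refl {Γ : Set (Pt n)}
    (hΓcyl : ∀ x ∈ Γ, ∀ t ∈ Icc (0:ℝ) 1, Function.update x (Fin.last n) t ∈ Γ)
    (hΓlast : ∀ x ∈ Γ, x (Fin.last n) ∈ Icc (0:ℝ) 1)
    (φ : Pt n → Pt n) (hφ : CellAdm Γ φ) :
    CellAdm Γ (reflVF φ) := by
  obtain ⟨hsm, hper, hdiv, hbd⟩ := hφ
  have hrefl_mem : ∀ x ∈ Γ, reflPt x ∈ Γ := by
    intro x hx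
    have h := hΓlast x hx
    exact hΓcyl x hx _ ⟨by linarith [h.2], by linarith [h.1]⟩
  refine ⟨?_, ?_, ?_, ?_⟩
  · intro k
    exact contDiff_const.mul ((hsm k).comp reflPt_contDiff)
  · intro k y kv
    show sgn n k * φ (reflPt (y + fun i => ((kv i : ℤ) : ℝ))) k = sgn n k * φ (reflPt y) k
    have hA : reflPt (y + fun i => ((kv i : ℤ) : ℝ)) =
        reflPt y + fun i => ((((fun i => if i = Fin.last n then -(kv i) else kv i) : Fin (n+1) → ℤ)
          i : ℤ) : ℝ) := by
      funext j
      show Function.update _ (Fin.last n) _ j = _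
      by_cases h : j = Fin.last n
      · subst h
        simp only [Function.update_self, Pi.add_apply, if_pos rfl]
        show 1 - (y (Fin.last n) + _) = (Function.update y (Fin.last n)
          (1 - y (Fin.last n)) (Fin.last n)) + _
        rw [Function.update_self]
        push_cast
        ring
      · simp only [Function.update_of_ne h, Pi.add_apply, if_neg h]
        show y j + _ = Function.update y (Fin.last n) (1 - y (Fin.last n)) j + _
        rw [Function.update_of_ne h]
    rw [hA]
    exact congrArg (fun z => sgn n k * z)
      (hper k (reflPt y) (fun i => if i = Fin.last n then -(kv i) else kv i))
  · intro x
    have h : ∀ j k, gradMat (reflVF φ) x j k = sgn n k * (sgn n j * gradMat φ (reflPt x) j k) :=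
      gradMat_reflVF φ hsm x
    calc ∑ j, gradMat (reflVF φ) x j j
        = ∑ j, gradMat φ (reflPt x) j j := by
          refine Finset.sum_congr rfl fun j _ => ?_
          rw [h j j]
          unfold sgn
          by_cases hj : j = Fin.last n <;> simp [hj]
      _ = 0 := hdiv _
  · intro x hx
    funext k
    show sgn n k * φ (reflPt x) k = (0 : Pt n) k
    rw [hbd _ (hrefl_mem x hx)]
    simp
lemma gradMat_continuous (w : Pt n → Pt n) (hw : ∀ k, ContDiff ℝ (⊤ : ℕ∞) (fun y => w y k))
    (j k : Fin (n+1)) : Continuous fun x => gradMat w x j k := by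
  have h := (hw k).continuous_fderiv_apply (by simp)
  exact h.comp (continuous_id.prodMk continuous_const)

lemma sumgrad_continuous (w φ : Pt n → Pt n) (hw : ∀ k, ContDiff ℝ (⊤ : ℕ∞) (fun y => w y k))
    (hφ : ∀ k, ContDiff ℝ (⊤ : ℕ∞) (fun y => φ y k)) :
    Continuous fun x => ∑ j, ∑ k, gradMat w x j k * gradMat φ x j k := by
  refine continuous_finset_sum _ fun j _ => continuous_finset_sum _ fun k _ => ?_
  exact (gradMat_continuous w hw j k).mul (gradMat_continuous φ hφ j k)

/-- shift transfer for weak solutions -/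
lemma sol_shift {Yf Γ : Set (Pt n)} {B : Set (Fin n → ℝ)}
    (hYfB : Yf = (Hm n) ⁻¹' ((Ioo (0:ℝ) 1) ×ˢ B)) (hB : B ⊆ Icc 0 1)
    (hΓcyl : ∀ x ∈ Γ, ∀ t ∈ Icc (0:ℝ) 1, Function.update x (Fin.last n) t ∈ Γ)
    (i : Fin (n+1)) (w : Pt n → Pt n) (hw : CellWeakSol Yf Γ i w) (s : ℝ) :
    CellWeakSol Yf Γ i (fun y => w (y + s • eL n)) := by
  obtain ⟨hadm, hwk⟩ := hw
  have hsm := hadm.1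
  have hper := hadm.2.1
  refine ⟨adm_shift hΓcyl w hadm s, ?_⟩
  intro φ hφ
  set ψ : Pt n → Pt n := fun y => φ (y + (-s) • eL n) with hψdef
  have hψ : CellAdm Γ ψ := adm_shift hΓcyl φ hφ (-s)
  set J : Pt n → ℝ := fun z => ∑ j, ∑ k, gradMat w z j k * gradMat ψ z j k with hJdef
  have hkey : ∀ x, (∑ j, ∑ k, gradMat (fun y => w (y + s • eL n)) x j k * gradMat φ x j k)
      = J (x + s • eL n) := by
    intro x
    refine Finset.sum_congr rfl fun j _ => Finset.sum_congr rfl fun k _ => ?_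
    rw [gradMat_shift w hsm _ x, hψdef]
    congr 1
    rw [gradMat_shift φ hφ.1 _ (x + s • eL n), shift_cancel]
  have hJc : Continuous J := sumgrad_continuous w ψ hsm hψ.1
  have hJper : ∀ x, J (x + eL n) = J x := by
    intro x
    refine Finset.sum_congr rfl fun j _ => Finset.sum_congr rfl fun k _ => ?_
    rw [gradMat_per_eL w hsm hper, gradMat_per_eL ψ hψ.1 hψ.2.1]
  calc ∫ x in Yf, ∑ j, ∑ k, gradMat (fun y => w (y + s • eL n)) x j k * gradMat φ x j k
      = ∫ x in Yf, J (x + s • eL n) := by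
        exact congrArg (integral _) (funext hkey)
    _ = ∫ x in Yf, J x := by rw [hYfB]; exact shiftInt B hB J hJc hJper s
    _ = ∫ x in Yf, ψ x i := hwk ψ hψ
    _ = ∫ x in Yf, φ x i := by
        rw [hYfB, hψdef]
        exact shiftInt B hB (fun x => φ x i) (hφ.1 i).continuous
          (fun x => congrFun (w_per_eL φ hφ.2.1 x) i) (-s)
/-- reflection transfer for weak solutions -/
lemma sol_refl {Yf Γ : Set (Pt n)} {B : Set (Fin n → ℝ)}
    (hYfB : Yf = (Hm n) ⁻¹' ((Ioo (0:ℝ) 1) ×ˢ B)) (hB : B ⊆ Icc 0 1)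
    (hΓcyl : ∀ x ∈ Γ, ∀ t ∈ Icc (0:ℝ) 1, Function.update x (Fin.last n) t ∈ Γ)
    (hΓlast : ∀ x ∈ Γ, x (Fin.last n) ∈ Icc (0:ℝ) 1)
    (i : Fin (n+1)) (hi : i ≠ Fin.last n)
    (w : Pt n → Pt n) (hw : CellWeakSol Yf Γ i w) :
    CellWeakSol Yf Γ i (reflVF w) := by
  obtain ⟨hadm, hwk⟩ := hw
  have hsm := hadm.1
  refine ⟨adm_refl hΓcyl hΓlast w hadm, ?_⟩
  intro φ hφ
  set ψ : Pt n → Pt n := reflVF φ with hψdef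
  have hψ : CellAdm Γ ψ := adm_refl hΓcyl hΓlast φ hφ
  set J : Pt n → ℝ := fun z => ∑ j, ∑ k, gradMat w z j k * gradMat ψ z j k with hJdef
  have hkey : ∀ x, (∑ j, ∑ k, gradMat (reflVF w) x j k * gradMat φ x j k)
      = J (reflPt x) := by
    intro x
    refine Finset.sum_congr rfl fun j _ => Finset.sum_congr rfl fun k _ => ?_
    rw [gradMat_reflVF w hsm x j k, hψdef, gradMat_reflVF φ hφ.1 (reflPt x) j k,
      reflPt_invol]
    have hsq : sgn n j * sgn n j = 1 := by
      unfold sgn; by_cases hj : j = Fin.last n <;> simp [hj]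
    have hsq' : sgn n k * sgn n k = 1 := by
      unfold sgn; by_cases hk : k = Fin.last n <;> simp [hk]
    nlinarith [hsq, hsq']
  have hJc : Continuous J := sumgrad_continuous w ψ hsm hψ.1
  calc ∫ x in Yf, ∑ j, ∑ k, gradMat (reflVF w) x j k * gradMat φ x j k
      = ∫ x in Yf, J (reflPt x) := congrArg (integral _) (funext hkey)
    _ = ∫ x in Yf, J x := by rw [hYfB]; exact reflInt B hB J hJc
    _ = ∫ x in Yf, ψ x i := hwk ψ hψ
    _ = ∫ x in Yf, φ (reflPt x) i := by
        refine congrArg (integral _) (funext fun x => ?_)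
        rw [hψdef]
        show sgn n i * φ (reflPt x) i = φ (reflPt x) i
        unfold sgn
        rw [if_neg hi, one_mul]
    _ = ∫ x in Yf, φ x i := by
        rw [hYfB]
        exact reflInt B hB (fun x => φ x i) (hφ.1 i).continuous
end Aux

/-- for cylindrical inclusions, the horizontal cell solutions `w_i`
(`i = 1,…,n-1`) are constant in `y_n`, their `n`-th component vanishes, and the
permeability tensor has block-diagonal structure: `K_{in} = K_{ni} = 0`. -/
theorem cylindrical_inclusions_block_structure (n : ℕ) (Ys' : Set (Fin n → ℝ))
    (hstrict : closure Ys' ⊆ {z : Fin n → ℝ | ∀ i, z i ∈ Ioo (0 : ℝ) 1})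
    (hne : Ys'.Nonempty) (hopen' : IsOpen Ys')
    (Yf Γ : Set (Pt n))
    (hYf : Yf = unitCube n \ closure (cylSolid Ys'))
    (hΓ : Γ = closure Yf ∩ closure (cylSolid Ys'))
    (w : Fin (n + 1) → Pt n → Pt n)
    (hw : ∀ i, CellWeakSol Yf Γ i (w i))
    (huniq : ∀ i, ∀ w' : Pt n → Pt n, CellWeakSol Yf Γ i w' → ∀ x ∈ Yf, w' x = w i x) :
    ∀ i : Fin n,
      -- `w_i` is constant with respect to `y_n`
      (∀ x ∈ Yf, ∀ t : ℝ, Function.update x (Fin.last n) t ∈ Yf →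
        w (Fin.castSucc i) (Function.update x (Fin.last n) t) = w (Fin.castSucc i) x) ∧
      -- its `n`-th component vanishes
      (∀ x ∈ Yf, w (Fin.castSucc i) x (Fin.last n) = 0) ∧
      -- block structure of the permeability tensor
      (∫ x in Yf, ∑ l, ∑ k,
        gradMat (w (Fin.castSucc i)) x l k * gradMat (w (Fin.last n)) x l k) = 0 ∧
      (∫ x in Yf, ∑ l, ∑ k,
        gradMat (w (Fin.last n)) x l k * gradMat (w (Fin.castSucc i)) x l k) = 0 := by
  -- setup
  set B : Set (Fin n → ℝ) := Yfp Ys' with hBdef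
  have hYfB : Yf = (Hm n) ⁻¹' ((Ioo (0:ℝ) 1) ×ˢ B) := by rw [hYf, Yf_eq]
  have hB : B ⊆ Icc 0 1 := by
    intro z hz
    exact ⟨fun j => (hz.1 j).1.le, fun j => (hz.1 j).2.le⟩
  have hΓpre : Γ = (Hm n) ⁻¹' ((Icc (0:ℝ) 1) ×ˢ (closure (Yfp Ys') ∩ closure Ys')) := by
    rw [hΓ, hYf, Gamma_eq]
  have hupdate_snd : ∀ (x : Pt n) (t : ℝ),
      (fun j => Function.update x (Fin.last n) t (Fin.castSucc j)) =
        (fun j => x (Fin.castSucc j)) := by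
    intro x t
    funext j
    exact Function.update_of_ne (Fin.castSucc_lt_last j).ne _ _
  have hΓcyl : ∀ x ∈ Γ, ∀ t ∈ Icc (0:ℝ) 1, Function.update x (Fin.last n) t ∈ Γ := by
    intro x hx t ht
    rw [hΓpre] at hx ⊢
    rw [mem_hm_preimage] at hx ⊢
    refine ⟨by rwa [Function.update_self], ?_⟩
    rw [hupdate_snd]
    exact hx.2
  have hΓlast : ∀ x ∈ Γ, x (Fin.last n) ∈ Icc (0:ℝ) 1 := by
    intro x hx
    rw [hΓpre, mem_hm_preimage] at hx
    exact hx.1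
  have hYfcyl : ∀ x ∈ Yf, ∀ t ∈ Ioo (0:ℝ) 1, Function.update x (Fin.last n) t ∈ Yf := by
    intro x hx t ht
    rw [hYfB] at hx ⊢
    rw [mem_hm_preimage] at hx ⊢
    refine ⟨by rwa [Function.update_self], ?_⟩
    rw [hupdate_snd]
    exact hx.2
  have hYfmeas : MeasurableSet Yf := by
    rw [hYfB]
    refine ((Hm n).isOpen_preimage.2 (isOpen_Ioo.prod ?_)).measurableSet
    have hbox : IsOpen {z : Fin n → ℝ | ∀ j, z j ∈ Ioo (0:ℝ) 1} := by
      have : {z : Fin n → ℝ | ∀ j, z j ∈ Ioo (0:ℝ) 1} =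
          Set.pi univ (fun _ => Ioo (0:ℝ) 1) := by
        ext z; simp [Set.mem_pi]
      rw [this]
      exact isOpen_set_pi finite_univ (fun _ _ => isOpen_Ioo)
    exact hbox.inter isClosed_closure.isOpen_compl
  intro i
  set i' : Fin (n+1) := Fin.castSucc i with hi'def
  -- Part 1 : constancy in the last variable
  have hconst : ∀ s : ℝ, ∀ x ∈ Yf, w i' (x + s • eL n) = w i' x := by
    intro s
    exact huniq i' _ (sol_shift hYfB hB hΓcyl i' (w i') (hw i') s)
  have part1 : ∀ x ∈ Yf, ∀ t : ℝ, Function.update x (Fin.last n) t ∈ Yf →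
      w i' (Function.update x (Fin.last n) t) = w i' x := by
    intro x hx t _
    have hupd : Function.update x (Fin.last n) t = x + (t - x (Fin.last n)) • eL n := by
      rw [add_single_eq_update]
      congr 1
      ring
    rw [hupd]
    exact hconst _ x hx
  -- Part 2 : last component vanishes
  have part2 : ∀ x ∈ Yf, w i' x (Fin.last n) = 0 := by
    intro x hx
    have hi'ne : i' ≠ Fin.last n := (Fin.castSucc_lt_last i).ne
    have huniqR := huniq i' _ (sol_refl hYfB hB hΓcyl hΓlast i' hi'ne (w i') (hw i'))
    have h1 := congrFun (huniqR x hx) (Fin.last n)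
    have hxlast : x (Fin.last n) ∈ Ioo (0:ℝ) 1 := by
      rw [hYfB, mem_hm_preimage] at hx
      exact hx.1
    have hrx : reflPt x ∈ Yf :=
      hYfcyl x hx _ ⟨by linarith [hxlast.2], by linarith [hxlast.1]⟩
    have h2 : w i' (reflPt x) = w i' x := part1 x hx (1 - x (Fin.last n)) hrx
    have h3 : sgn n (Fin.last n) * w i' (reflPt x) (Fin.last n) = w i' x (Fin.last n) := h1
    rw [h2] at h3
    unfold sgn at h3
    rw [if_pos rfl] at h3
    linarith
  refine ⟨part1, part2, ?_, ?_⟩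
  · -- K_{in} = 0
    have hKni := (hw (Fin.last n)).2 (w i') (hw i').1
    have hswap : (fun x => ∑ l, ∑ k, gradMat (w i') x l k * gradMat (w (Fin.last n)) x l k)
        = fun x => ∑ l, ∑ k, gradMat (w (Fin.last n)) x l k * gradMat (w i') x l k := by
      funext x
      exact Finset.sum_congr rfl fun l _ => Finset.sum_congr rfl fun k _ => mul_comm _ _
    calc ∫ x in Yf, ∑ l, ∑ k, gradMat (w i') x l k * gradMat (w (Fin.last n)) x l k
        = ∫ x in Yf, ∑ l, ∑ k, gradMat (w (Fin.last n)) x l k * gradMat (w i') x l k := by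
          rw [hswap]
      _ = ∫ x in Yf, w i' x (Fin.last n) := hKni
      _ = 0 := by
          rw [setIntegral_congr_fun hYfmeas (fun x hx => part2 x hx)]
          exact integral_zero _ _
  · -- K_{ni} = 0
    have hKni := (hw (Fin.last n)).2 (w i') (hw i').1
    calc ∫ x in Yf, ∑ l, ∑ k, gradMat (w (Fin.last n)) x l k * gradMat (w i') x l k
        = ∫ x in Yf, w i' x (Fin.last n) := hKni
      _ = 0 := by
          rw [setIntegral_congr_fun hYfmeas (fun x hx => part2 x hx)]
          exact integral_zero _ _

end
end

section
/- Let $w_{\varepsilon,\alpha}, v_{\varepsilon,\alpha} \in L^2(\Omega_{\varepsilon,\alpha})$ be sequences such that $w_{\varepsilon,\alpha}$ converges strongly in the thin-layer two-scale sense to $w_0 \in L^2(\Omega)$ (a limit independent of the microscopic variable) and $v_{\varepsilon,\alpha}$ converges weakly in the thin-layer two-scale sense to $v_0 \in L^2(\Omega\times Y)$. Then for every $\phi \in C^\infty(\overline{\Omega})$, $\varepsilon^{-\alpha}\int_{\Omega_{\varepsilon,\alpha}} w_{\varepsilon,\alpha} v_{\varepsilon,\alpha} \phi(\bar x, x_n/\varepsilon^\alpha)\,dx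 \to \int_\Omega \int_Y w_0(x) v_0(x,y) \phi(x) \, dy\,dx$ as $\varepsilon \to 0$. -/
open MeasureTheory Set Filter Topology

noncomputable section

def l2N {n : ℕ} (S : Set (Pt n)) (f : Pt n → ℝ) : ℝ :=
  Real.sqrt (∫ x in S, (f x) ^ 2)

def l2NV {n : ℕ} (S : Set (Pt n)) (f : Pt n → Pt n) : ℝ :=
  Real.sqrt (∫ x in S, ∑ i, (f x i) ^ 2)

def l2NM {n : ℕ} (S : Set (Pt n)) (G : Pt n → Fin (n + 1) → Fin (n + 1) → ℝ) : ℝ :=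
  Real.sqrt (∫ x in S, ∑ i, ∑ j, (G x i j) ^ 2)

def WeakPD {n : ℕ} (S : Set (Pt n)) (i : Fin (n + 1)) (v g : Pt n → ℝ) : Prop :=
  ∀ φ : Pt n → ℝ, ContDiff ℝ (⊤ : ℕ∞) φ → HasCompactSupport φ → tsupport φ ⊆ S →
    ∫ x in S, v x * fderiv ℝ φ x (Pi.single i 1) = - ∫ x in S, g x * φ x

def SigmaBox {n : ℕ} (a b : Fin n → ℤ) : Set (Fin n → ℝ) :=
  {z | ∀ i, z i ∈ Ioo (a i : ℝ) (b i : ℝ)}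

def layer {n : ℕ} (a b : Fin n → ℤ) (h : ℝ) : Set (Pt n) :=
  {x | (fun i => x (Fin.castSucc i)) ∈ SigmaBox a b ∧ x (Fin.last n) ∈ Ioo (-h) h}

def cellSet {n : ℕ} (ε : ℝ) (k : Fin (n + 1) → ℤ) (A : Set (Pt n)) : Set (Pt n) :=
  (fun y : Pt n => ε • (y + fun i => (k i : ℝ))) '' A

def Keps {n : ℕ} (a b : Fin n → ℤ) (ε h : ℝ) : Set (Fin (n + 1) → ℤ) :=
  {k | cellSet ε k (unitCube n) ⊆ layer a b h}

def perfLayer {n : ℕ} (a b : Fin n → ℤ) (ε h : ℝ) (Yf : Set (Pt n)) : Set (Pt n) :=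
  interior (⋃ k ∈ Keps a b ε h, cellSet ε k (closure Yf))

def perfSurf {n : ℕ} (a b : Fin n → ℤ) (ε h : ℝ) (Γ : Set (Pt n)) : Set (Pt n) :=
  ⋃ k ∈ Keps a b ε h, cellSet ε k Γ

def latBdryF {n : ℕ} (a b : Fin n → ℤ) (ε h : ℝ) (Yf : Set (Pt n)) : Set (Pt n) :=
  frontier (perfLayer a b ε h Yf) ∩
    {x | (fun i => x (Fin.castSucc i)) ∈ frontier (SigmaBox a b) ∧ x (Fin.last n) ∈ Ioo (-h) h}

def topBotF {n : ℕ} (a b : Fin n → ℤ) (ε h : ℝ) (Yf : Set (Pt n)) : Set (Pt n) :=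
  frontier (perfLayer a b ε h Yf) ∩ {x | x (Fin.last n) = h ∨ x (Fin.last n) = -h}

def EpsAdm (ε α : ℝ) : Prop :=
  0 < ε ∧ 0 < α ∧ α < 1 ∧ (∃ N : ℕ, 0 < N ∧ ε = 1 / N) ∧
    (∃ M : ℕ, 0 < M ∧ ε ^ α = M * ε)

def macroMap {n : ℕ} (ε α : ℝ) (x : Pt n) : Pt n :=
  Function.update x (Fin.last n) (x (Fin.last n) / ε ^ α)

def tsInt {n : ℕ} (a b : Fin n → ℤ) (ε α : ℝ) (v : Pt n → ℝ) (φ : Pt n → Pt n → ℝ) : ℝ :=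
  (ε ^ α)⁻¹ * ∫ x in layer a b (ε ^ α), v x * φ (macroMap ε α x) (ε⁻¹ • x)

def AdmTest {n : ℕ} (a b : Fin n → ℤ) (φ : Pt n → Pt n → ℝ) : Prop :=
  (∀ x, Continuous (φ x)) ∧ (∀ x, YPer (φ x)) ∧
    Measurable (Function.uncurry φ) ∧
    ∃ B : Pt n → ℝ, (∀ x y, |φ x y| ≤ B x) ∧
      MemLp B 2 (volume.restrict (layer a b 1))

def TSconv {n : ℕ} (a b : Fin n → ℤ) (α : ℝ) (ε : ℕ → ℝ) (v : ℕ → Pt n → ℝ)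
    (v0 : Pt n → Pt n → ℝ) : Prop :=
  ∀ φ : Pt n → Pt n → ℝ, AdmTest a b φ →
    Tendsto (fun j => tsInt a b (ε j) α (v j) φ) atTop
      (𝓝 (∫ p in (layer a b 1) ×ˢ (unitCube n), v0 p.1 p.2 * φ p.1 p.2))



section Helpers

def scaleLast {n : ℕ} (r : ℝ) : Pt n → Pt n :=
  fun x => Function.update x (Fin.last n) (r * x (Fin.last n))

lemma scaleLast_eq_lin {n : ℕ} (r : ℝ) :
    ⇑(Matrix.toLin' (Matrix.diagonal (fun i : Fin (n+1) => if i = Fin.last n then r else 1))) =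
      scaleLast (n := n) r := by
  funext x i
  simp only [Matrix.toLin'_apply, Matrix.mulVec_diagonal, scaleLast, Function.update_apply]
  split_ifs with h
  · subst h; ring
  · ring

lemma det_scaleLast_lin {n : ℕ} (r : ℝ) :
    LinearMap.det (Matrix.toLin'
      (Matrix.diagonal (fun i : Fin (n+1) => if i = Fin.last n then r else 1))) = r := by
  rw [LinearMap.det_toLin', Matrix.det_diagonal]
  simp

lemma continuous_scaleLast {n : ℕ} (r : ℝ) : Continuous (scaleLast (n := n) r) := by
  rw [← scaleLast_eq_lin]
  exact LinearMap.continuous_of_finiteDimensional _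

lemma measurable_scaleLast {n : ℕ} (r : ℝ) : Measurable (scaleLast (n := n) r) :=
  (continuous_scaleLast r).measurable

lemma map_scaleLast {n : ℕ} {r : ℝ} (hr : r ≠ 0) :
    Measure.map (scaleLast (n := n) r) volume = ENNReal.ofReal |r|⁻¹ • volume := by
  rw [← scaleLast_eq_lin]
  rw [Measure.map_linearMap_addHaar_pi_eq_smul_addHaar (by rw [det_scaleLast_lin]; exact hr)]
  rw [det_scaleLast_lin, abs_inv]


lemma scaleLast_castSucc {n : ℕ} (r : ℝ) (x : Pt n) (i : Fin n) :
    scaleLast r x (Fin.castSucc i) = x (Fin.castSucc i) := by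
  simp [scaleLast, Function.update_apply, Fin.castSucc_lt_last i |>.ne]

lemma scaleLast_last {n : ℕ} (r : ℝ) (x : Pt n) :
    scaleLast r x (Fin.last n) = r * x (Fin.last n) := by
  simp [scaleLast]

lemma scaleLast_comp {n : ℕ} (r s : ℝ) (x : Pt n) :
    scaleLast r (scaleLast s x) = scaleLast (r * s) x := by
  funext i
  rcases eq_or_ne i (Fin.last n) with h | h
  · subst h; simp [scaleLast_last, mul_assoc]
  · simp [scaleLast, Function.update_apply, h]

lemma scaleLast_inv_self {n : ℕ} {r : ℝ} (hr : r ≠ 0) (x : Pt n) :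
    scaleLast r (scaleLast r⁻¹ x) = x := by
  rw [scaleLast_comp, mul_inv_cancel₀ hr]
  funext i
  rcases eq_or_ne i (Fin.last n) with h | h
  · subst h; simp [scaleLast_last]
  · simp [scaleLast, Function.update_apply, h]

lemma preimage_scaleLast_layer {n : ℕ} (a b : Fin n → ℤ) {r h : ℝ} (hr : 0 < r) :
    scaleLast (n := n) r ⁻¹' (layer a b h) = layer a b (h / r) := by
  have key : ∀ t : ℝ, (r * t ∈ Ioo (-h) h ↔ t ∈ Ioo (-(h/r)) (h/r)) := by
    intro t
    rw [mem_Ioo, mem_Ioo, ← neg_div, div_lt_iff₀ hr, lt_div_iff₀ hr, mul_comm t r]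
  ext x
  simp only [mem_preimage, layer, mem_setOf_eq, SigmaBox]
  rw [scaleLast_last, key]
  constructor
  · rintro ⟨h1, h2⟩; exact ⟨by simpa [scaleLast_castSucc] using h1, h2⟩
  · rintro ⟨h1, h2⟩; exact ⟨by simpa [scaleLast_castSucc] using h1, h2⟩

lemma isOpen_layer {n : ℕ} (a b : Fin n → ℤ) (h : ℝ) : IsOpen (layer a b h) := by
  have : layer a b h =
      (⋂ i : Fin n, {x : Pt n | x (Fin.castSucc i) ∈ Ioo (a i : ℝ) (b i : ℝ)}) ∩
        {x : Pt n | x (Fin.last n) ∈ Ioo (-h) h} := by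
    ext x; simp [layer, SigmaBox, forall_and]
  rw [this]
  refine IsOpen.inter (isOpen_iInter_of_finite fun i => ?_) ?_
  · exact isOpen_Ioo.preimage (continuous_apply _)
  · exact isOpen_Ioo.preimage (continuous_apply _)

lemma measurableSet_layer {n : ℕ} (a b : Fin n → ℤ) (h : ℝ) :
    MeasurableSet (layer a b h) := (isOpen_layer a b h).measurableSet

section CoV
open scoped ENNReal
variable {n : ℕ} {a b : Fin n → ℤ}

lemma map_scaleLast_restrict {c : ℝ} (hc : 0 < c) (a b : Fin n → ℤ) :
    Measure.map (scaleLast (n := n) c⁻¹) (volume.restrict (layer a b c)) =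
      ENNReal.ofReal c • volume.restrict (layer a b 1) := by
  have h1 : layer a b c = scaleLast (n := n) c⁻¹ ⁻¹' (layer a b 1) := by
    rw [preimage_scaleLast_layer a b (by positivity : (0:ℝ) < c⁻¹)]
    norm_num
  rw [h1, ← Measure.restrict_map (measurable_scaleLast _) (measurableSet_layer a b 1),
    map_scaleLast (by positivity : (c:ℝ)⁻¹ ≠ 0)]
  rw [Measure.restrict_smul]
  congr 1
  rw [abs_inv, inv_inv, abs_of_pos hc]

/-- Change of variables: integrating `F ∘ (scaleLast c⁻¹)` over the thin layer. -/
lemma cov {c : ℝ} (hc : 0 < c) (a b : Fin n → ℤ) (F : Pt n → ℝ)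
    (hF : AEStronglyMeasurable F (volume.restrict (layer a b 1))) :
    ∫ x in layer a b c, F (scaleLast c⁻¹ x) = c * ∫ y in layer a b 1, F y := by
  have hmap := map_scaleLast_restrict hc a b
  have hF' : AEStronglyMeasurable F
      (Measure.map (scaleLast (n := n) c⁻¹) (volume.restrict (layer a b c))) := by
    rw [hmap]
    exact hF.mono_ac (Measure.smul_absolutelyContinuous)
  rw [← integral_map (measurable_scaleLast _).aemeasurable hF', hmap,
    integral_smul_measure]
  simp [ENNReal.toReal_ofReal hc.le]

end CoV

section Tilde
variable {n : ℕ}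

lemma map_scaleLast_restrict' {c : ℝ} (hc : 0 < c) (a b : Fin n → ℤ) :
    Measure.map (scaleLast (n := n) c) (volume.restrict (layer a b 1)) =
      ENNReal.ofReal c⁻¹ • volume.restrict (layer a b c) := by
  have h1 : layer a b 1 = scaleLast (n := n) c ⁻¹' (layer a b c) := by
    rw [preimage_scaleLast_layer a b hc, div_self hc.ne']
  rw [h1, ← Measure.restrict_map (measurable_scaleLast _) (measurableSet_layer a b c),
    map_scaleLast hc.ne']
  rw [Measure.restrict_smul, abs_of_pos hc]

lemma memℒp_tilde {c : ℝ} (hc : 0 < c) (a b : Fin n → ℤ) {f : Pt n → ℝ}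
    (hf : MemLp f 2 (volume.restrict (layer a b c))) :
    MemLp (fun y => f (scaleLast c y)) 2 (volume.restrict (layer a b 1)) := by
  have h1 : MemLp f 2
      (Measure.map (scaleLast (n := n) c) (volume.restrict (layer a b 1))) := by
    rw [map_scaleLast_restrict' hc a b]
    exact hf.smul_measure (by simp)
  exact h1.comp_of_map (measurable_scaleLast c).aemeasurable

end Tilde


section L2H
variable {α : Type*} [MeasurableSpace α] {μ : Measure α}

lemma int_mul_eq_inner {f g : α → ℝ} (hf : MemLp f 2 μ) (hg : MemLp g 2 μ) :
    ∫ x, f x * g x ∂μ = @inner ℝ _ _ (hf.toLp f) (hg.toLp g) := by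
  rw [MeasureTheory.L2.inner_def]
  refine (integral_congr_ae ?_).symm
  filter_upwards [hf.coeFn_toLp, hg.coeFn_toLp] with x h1 h2
  simp [h1, h2, RCLike.inner_apply, starRingEnd_apply, mul_comm]

lemma integrable_mul_L2 {f g : α → ℝ} (hf : MemLp f 2 μ) (hg : MemLp g 2 μ) :
    Integrable (fun x => f x * g x) μ := by
  have := MeasureTheory.L2.integrable_inner (𝕜 := ℝ) (hf.toLp f) (hg.toLp g)
  refine this.congr ?_
  filter_upwards [hf.coeFn_toLp, hg.coeFn_toLp] with x h1 h2
  simp [h1, h2, RCLike.inner_apply, starRingEnd_apply, mul_comm]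

lemma norm_toLp_eq_sqrt {f : α → ℝ} (hf : MemLp f 2 μ) :
    ‖hf.toLp f‖ = Real.sqrt (∫ x, f x ^ 2 ∂μ) := by
  have h1 : @inner ℝ _ _ (hf.toLp f) (hf.toLp f) = ∫ x, f x ^ 2 ∂μ := by
    rw [← int_mul_eq_inner hf hf]; congr 1; funext x; ring
  rw [← Real.sqrt_sq (norm_nonneg _), ← real_inner_self_eq_norm_sq, h1]

lemma integral_CS {f g : α → ℝ} (hf : MemLp f 2 μ) (hg : MemLp g 2 μ) :
    |∫ x, f x * g x ∂μ| ≤ Real.sqrt (∫ x, f x ^ 2 ∂μ) * Real.sqrt (∫ x, g x ^ 2 ∂μ) := by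
  rw [int_mul_eq_inner hf hg, ← norm_toLp_eq_sqrt hf, ← norm_toLp_eq_sqrt hg]
  exact abs_real_inner_le_norm _ _

lemma memℒp_comp_of_map {β : Type*} [MeasurableSpace β] {ν : Measure α} {g : α → β}
    {f : β → ℝ} (hf : MemLp f 2 (Measure.map g ν)) (hg : AEMeasurable g ν) :
    MemLp (fun x => f (g x)) 2 ν :=
  hf.comp_of_map hg

end L2H

lemma volume_unitCube (n : ℕ) : volume (unitCube n) = 1 := by
  have : unitCube n = Set.pi univ (fun _ : Fin (n+1) => Ioo (0:ℝ) 1) := by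
    ext y; simp [unitCube, Set.mem_pi]
  rw [this, volume_pi_pi]
  simp

lemma exists_bound_on_layer {n : ℕ} (a b : Fin n → ℤ) (φ : Pt n → ℝ) (hφ : Continuous φ) :
    ∃ C : ℝ, 0 ≤ C ∧ ∀ x ∈ layer a b 1, |φ x| ≤ C := by
  classical
  set m : Fin (n+1) → ℝ := Fin.lastCases (-1) (fun i => (a i : ℝ)) with hm
  set M : Fin (n+1) → ℝ := Fin.lastCases 1 (fun i => (b i : ℝ)) with hM
  have hsub : layer a b 1 ⊆ Set.pi univ (fun i => Icc (m i) (M i)) := by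
    intro x hx
    rw [Set.mem_pi]
    intro i _
    induction i using Fin.lastCases with
    | last =>
      simp only [hm, hM, Fin.lastCases_last]
      exact ⟨hx.2.1.le, hx.2.2.le⟩
    | cast i =>
      simp only [hm, hM, Fin.lastCases_castSucc]
      exact ⟨(hx.1 i).1.le, (hx.1 i).2.le⟩
  have hcomp : IsCompact (Set.pi univ (fun i => Icc (m i) (M i))) :=
    isCompact_univ_pi fun i => isCompact_Icc
  obtain ⟨C, hC⟩ := hcomp.exists_bound_of_continuousOn hφ.continuousOn
  exact ⟨max C 0, le_max_right _ _, fun x hx =>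
    le_trans (by simpa [Real.norm_eq_abs] using hC x (hsub hx)) (le_max_left _ _)⟩

lemma integral_fst_prod {n : ℕ} (a b : Fin n → ℤ) (F : Pt n → ℝ)
    (hF : AEStronglyMeasurable F (volume.restrict (layer a b 1))) :
    ∫ p in (layer a b 1) ×ˢ unitCube n, F p.1 = ∫ x in layer a b 1, F x := by
  have h1 : (volume : Measure (Pt n × Pt n)).restrict ((layer a b 1) ×ˢ unitCube n)
      = (volume.restrict (layer a b 1)).prod (volume.restrict (unitCube n)) := by
    rw [MeasureTheory.Measure.volume_eq_prod, Measure.prod_restrict]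
  rw [h1]
  have h2 : Measure.map Prod.fst
      ((volume.restrict (layer a b 1)).prod (volume.restrict (unitCube n)))
      = volume.restrict (layer a b 1) := by
    rw [Measure.map_fst_prod]
    simp [Measure.restrict_apply, volume_unitCube n]
  have : ∫ p in (⊤ : Set (Pt n × Pt n)), F p.1
      ∂((volume.restrict (layer a b 1)).prod (volume.restrict (unitCube n))) = _ := rfl
  calc ∫ p, F p.1 ∂((volume.restrict (layer a b 1)).prod (volume.restrict (unitCube n)))
      = ∫ x, F x ∂(Measure.map Prod.fst
          ((volume.restrict (layer a b 1)).prod (volume.restrict (unitCube n)))) := by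
        rw [integral_map measurable_fst.aemeasurable (by rw [h2]; exact hF)]
    _ = ∫ x in layer a b 1, F x := by rw [h2]

end Helpers

/-- the product of a strongly two-scale convergent sequence (with limit
independent of the microscopic variable) and a weakly two-scale convergent sequence
converges in the distributional sense against macroscopic test functions `φ ∈ C^∞(Ω̄)`. -/
theorem strong_times_weak_two_scale (n : ℕ) (a b : Fin n → ℤ) (hab : ∀ i, a i < b i)
    (α : ℝ) (hα : 0 < α ∧ α < 1)
    (ε : ℕ → ℝ) (hε0 : Tendsto ε atTop (𝓝 (0 : ℝ))) (hadm : ∀ j, EpsAdm (ε j) α)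
    (w v : ℕ → Pt n → ℝ) (w0 : Pt n → ℝ) (v0 : Pt n → Pt n → ℝ)
    (hmemw : ∀ j, MemLp (w j) 2 (volume.restrict (layer a b ((ε j) ^ α))))
    (hmemv : ∀ j, MemLp (v j) 2 (volume.restrict (layer a b ((ε j) ^ α))))
    (hw0 : MemLp w0 2 (volume.restrict (layer a b 1)))
    (hv0 : MemLp (fun p : Pt n × Pt n => v0 p.1 p.2) 2
      (volume.restrict ((layer a b 1) ×ˢ unitCube n)))
    -- `w` converges strongly in the two-scale sense to `w0 = w0(x)`
    (hwconv : TSconv a b α ε w (fun x _ => w0 x))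
    (hwnorm : Tendsto (fun j => ((ε j) ^ (α / 2))⁻¹ * l2N (layer a b ((ε j) ^ α)) (w j))
      atTop (𝓝 (Real.sqrt (∫ x in layer a b 1, (w0 x) ^ 2))))
    -- `v` converges weakly in the two-scale sense to `v0`
    (hvconv : TSconv a b α ε v v0) :
    ∀ φ : Pt n → ℝ, ContDiff ℝ (⊤ : ℕ∞) φ →
      Tendsto (fun j => ((ε j) ^ α)⁻¹ *
          ∫ x in layer a b ((ε j) ^ α), w j x * v j x * φ (macroMap (ε j) α x))
        atTop
        (𝓝 (∫ p in (layer a b 1) ×ˢ unitCube n, w0 p.1 * v0 p.1 p.2 * φ p.1)) := by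
  intro φ hφ
  have hφc : Continuous φ := hφ.continuous
  obtain ⟨C, hC0, hCb⟩ := exists_bound_on_layer a b φ hφc
  have hc : ∀ j, 0 < ε j ^ α := fun j => Real.rpow_pos_of_pos (hadm j).1 α
  -- tilde (unfolded) functions on the reference layer
  set wt : ℕ → Pt n → ℝ := fun j y => w j (scaleLast (ε j ^ α) y) with hwt_def
  set vt : ℕ → Pt n → ℝ := fun j y => v j (scaleLast (ε j ^ α) y) with hvt_def
  have hmwt : ∀ j, MemLp (wt j) 2 (volume.restrict (layer a b 1)) :=
    fun j => memℒp_tilde (hc j) a b (hmemw j)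
  have hmvt : ∀ j, MemLp (vt j) 2 (volume.restrict (layer a b 1)) :=
    fun j => memℒp_tilde (hc j) a b (hmemv j)
  have hmac : ∀ j (x : Pt n), macroMap (ε j) α x = scaleLast (ε j ^ α)⁻¹ x := by
    intro j x
    funext i
    simp only [macroMap, scaleLast, Function.update_apply]
    split_ifs with h
    · rw [div_eq_inv_mul]
    · rfl
  have hwinv : ∀ j (x : Pt n), wt j (scaleLast (ε j ^ α)⁻¹ x) = w j x := by
    intro j x; simp only [hwt_def]; rw [scaleLast_inv_self (hc j).ne' x]
  have hvinv : ∀ j (x : Pt n), vt j (scaleLast (ε j ^ α)⁻¹ x) = v j x := by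
    intro j x; simp only [hvt_def]; rw [scaleLast_inv_self (hc j).ne' x]
  -- basic reduction of scaled integrals to the reference layer
  have red : ∀ (j : ℕ) (G : Pt n → ℝ), AEStronglyMeasurable G (volume.restrict (layer a b 1)) →
      ((ε j ^ α)⁻¹ * ∫ x in layer a b (ε j ^ α), G (scaleLast (ε j ^ α)⁻¹ x)) =
        ∫ y in layer a b 1, G y := by
    intro j G hG
    rw [cov (hc j) a b G hG, ← mul_assoc, inv_mul_cancel₀ (hc j).ne', one_mul]
  -- the measurable representative of w0
  set w0m : Pt n → ℝ := hw0.aestronglyMeasurable.mk w0 with hw0m_def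
  have hw0m_sm : StronglyMeasurable w0m := hw0.aestronglyMeasurable.stronglyMeasurable_mk
  have hw0_ae : w0 =ᵐ[volume.restrict (layer a b 1)] w0m := hw0.aestronglyMeasurable.ae_eq_mk
  have hmw0m : MemLp w0m 2 (volume.restrict (layer a b 1)) := hw0.ae_eq hw0_ae
  have hmem_layer : ∀ᵐ x ∂(volume.restrict (layer a b 1)), x ∈ layer a b 1 :=
    ae_restrict_mem (measurableSet_layer a b 1)
  -- membership of products with φ
  have hmulφ : ∀ (g : Pt n → ℝ), MemLp g 2 (volume.restrict (layer a b 1)) →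
      MemLp (fun y => g y * φ y) 2 (volume.restrict (layer a b 1)) := by
    intro g hg
    refine MemLp.of_le (hg.const_mul C) (hg.aestronglyMeasurable.mul hφc.aestronglyMeasurable) ?_
    filter_upwards [hmem_layer] with x hx
    rw [Real.norm_eq_abs, Real.norm_eq_abs, abs_mul, abs_mul, abs_of_nonneg hC0, mul_comm C]
    exact mul_le_mul_of_nonneg_left (hCb x hx) (abs_nonneg _)
  have hvtφ : ∀ j, MemLp (fun y => vt j y * φ y) 2 (volume.restrict (layer a b 1)) :=
    fun j => hmulφ _ (hmvt j)
  -- admissible test functions independent of the micro variable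
  have adm : ∀ g : Pt n → ℝ, Measurable g → MemLp g 2 (volume.restrict (layer a b 1)) →
      AdmTest a b (fun x (_ : Pt n) => g x) := by
    intro g hgm hgmem
    refine ⟨fun x => continuous_const, fun x y k => rfl, hgm.comp measurable_fst,
      fun x => |g x|, fun x y => le_of_eq rfl, ?_⟩
    simpa [Real.norm_eq_abs] using hgmem.norm
  -- identification of tsInt against macroscopic tests
  have tsInt_eq : ∀ (j : ℕ) (u : Pt n → ℝ),
      MemLp u 2 (volume.restrict (layer a b (ε j ^ α))) → ∀ g : Pt n → ℝ,
      AEStronglyMeasurable g (volume.restrict (layer a b 1)) →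
      tsInt a b (ε j) α u (fun x (_ : Pt n) => g x)
        = ∫ y in layer a b 1, u (scaleLast (ε j ^ α) y) * g y := by
    intro j u hu g hg
    have hut : MemLp (fun y => u (scaleLast (ε j ^ α) y)) 2 (volume.restrict (layer a b 1)) :=
      memℒp_tilde (hc j) a b hu
    have h1 : ∀ x : Pt n, u x * g (macroMap (ε j) α x)
        = (fun y => u (scaleLast (ε j ^ α) y) * g y) (scaleLast (ε j ^ α)⁻¹ x) := by
      intro x
      simp only
      rw [hmac j x, scaleLast_inv_self (hc j).ne' x]
    calc tsInt a b (ε j) α u (fun x (_ : Pt n) => g x)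
        = (ε j ^ α)⁻¹ * ∫ x in layer a b (ε j ^ α),
            (fun y => u (scaleLast (ε j ^ α) y) * g y) (scaleLast (ε j ^ α)⁻¹ x) := by
          unfold tsInt
          congr 1
          exact integral_congr_ae (Filter.Eventually.of_forall fun x => h1 x)
      _ = ∫ y in layer a b 1, u (scaleLast (ε j ^ α) y) * g y :=
          red j _ (hut.aestronglyMeasurable.mul hg)
  -- product measure bookkeeping
  have hprod_eq : (volume : Measure (Pt n × Pt n)).restrict ((layer a b 1) ×ˢ unitCube n)
      = (volume.restrict (layer a b 1)).prod (volume.restrict (unitCube n)) := by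
    rw [MeasureTheory.Measure.volume_eq_prod, Measure.prod_restrict]
  have hmapfst : Measure.map Prod.fst
      ((volume.restrict (layer a b 1)).prod (volume.restrict (unitCube n)))
      = volume.restrict (layer a b 1) := by
    rw [Measure.map_fst_prod]
    simp [Measure.restrict_apply, volume_unitCube n]
  have hfst_ae : (fun p : Pt n × Pt n => w0m p.1)
      =ᵐ[(volume : Measure (Pt n × Pt n)).restrict ((layer a b 1) ×ˢ unitCube n)]
      (fun p => w0 p.1) := by
    rw [hprod_eq]
    exact MeasureTheory.ae_eq_comp measurable_fst.aemeasurable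
      (by rw [hmapfst]; exact hw0_ae.symm)
  -- Hilbert space elements
  set W0 : Lp ℝ 2 (volume.restrict (layer a b 1)) := hw0.toLp w0 with hW0_def
  set Wj : ℕ → Lp ℝ 2 (volume.restrict (layer a b 1)) := fun j => (hmwt j).toLp (wt j)
    with hWj_def
  set Vj : ℕ → Lp ℝ 2 (volume.restrict (layer a b 1)) := fun j => (hmvt j).toLp (vt j)
    with hVj_def
  -- convergence of norms : ‖Wj‖ → ‖W0‖
  have hW0norm : ‖W0‖ = Real.sqrt (∫ x in layer a b 1, (w0 x) ^ 2) := norm_toLp_eq_sqrt hw0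
  have hWjnorm : ∀ j, ‖Wj j‖ = Real.sqrt (∫ y in layer a b 1, (wt j y) ^ 2) :=
    fun j => norm_toLp_eq_sqrt (hmwt j)
  have hWnorm_eq : ∀ j, ((ε j) ^ (α / 2))⁻¹ * l2N (layer a b ((ε j) ^ α)) (w j) = ‖Wj j‖ := by
    intro j
    have hsqm : AEStronglyMeasurable (fun y => (wt j y) ^ 2) (volume.restrict (layer a b 1)) := by
      refine ((hmwt j).aestronglyMeasurable.mul (hmwt j).aestronglyMeasurable).congr ?_
      exact Filter.Eventually.of_forall fun y => (sq (wt j y)).symm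
    have hcov : ∫ x in layer a b (ε j ^ α), (w j x) ^ 2
        = (ε j ^ α) * ∫ y in layer a b 1, (wt j y) ^ 2 := by
      rw [← cov (hc j) a b (fun y => (wt j y) ^ 2) hsqm]
      refine integral_congr_ae (Filter.Eventually.of_forall fun x => ?_)
      simp only
      rw [hwinv j x]
    have hsqrtc : (ε j) ^ (α / 2) = Real.sqrt (ε j ^ α) := by
      rw [Real.sqrt_eq_rpow, show α / 2 = α * (1 / 2) by ring,
        Real.rpow_mul (hadm j).1.le]
    rw [hWjnorm j, l2N, hcov, Real.sqrt_mul (hc j).le, hsqrtc, ← mul_assoc,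
      inv_mul_cancel₀ (Real.sqrt_pos.mpr (hc j)).ne', one_mul]
  have h1 : Tendsto (fun j => ‖Wj j‖) atTop (𝓝 ‖W0‖) := by
    rw [hW0norm]
    exact Tendsto.congr (fun j => hWnorm_eq j) hwnorm
  -- convergence of the mixed term
  have h2 : Tendsto (fun j => (inner ℝ (Wj j) W0)) atTop (𝓝 (‖W0‖ ^ 2)) := by
    have hts := hwconv (fun x (_ : Pt n) => w0m x) (adm w0m hw0m_sm.measurable hmw0m)
    have hseq : ∀ j, tsInt a b (ε j) α (w j) (fun x (_ : Pt n) => w0m x)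
        = (inner ℝ (Wj j) W0) := by
      intro j
      rw [tsInt_eq j (w j) (hmemw j) w0m hw0m_sm.aestronglyMeasurable,
        int_mul_eq_inner (hmwt j) hmw0m, MemLp.toLp_congr hmw0m hw0 hw0_ae.symm]
    have hlim : (∫ p in (layer a b 1) ×ˢ unitCube n,
        (fun x (_ : Pt n) => w0 x) p.1 p.2 * (fun x (_ : Pt n) => w0m x) p.1 p.2)
        = ‖W0‖ ^ 2 := by
      have e1 : (∫ p in (layer a b 1) ×ˢ unitCube n,
          (fun x (_ : Pt n) => w0 x) p.1 p.2 * (fun x (_ : Pt n) => w0m x) p.1 p.2)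
          = ∫ x in layer a b 1, w0 x * w0m x :=
        integral_fst_prod a b (fun x => w0 x * w0m x)
          (hw0.aestronglyMeasurable.mul hw0m_sm.aestronglyMeasurable)
      have e2 : (∫ x in layer a b 1, w0 x * w0m x) = ∫ x in layer a b 1, (w0 x) ^ 2 := by
        refine integral_congr_ae ?_
        filter_upwards [hw0_ae] with y hy
        rw [← hy, sq]
      rw [e1, e2, hW0norm, Real.sq_sqrt (integral_nonneg fun x => sq_nonneg _)]
    rw [← hlim]
    exact Tendsto.congr hseq hts
  -- strong convergence : ‖Wj − W0‖ → 0
  have hA : Tendsto (fun j => ‖Wj j - W0‖) atTop (𝓝 0) := by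
    have hA2 : Tendsto (fun j => ‖Wj j - W0‖ ^ 2) atTop (𝓝 0) := by
      have hid : ∀ j, ‖Wj j - W0‖ ^ 2
          = ‖Wj j‖ ^ 2 - 2 * (inner ℝ (Wj j) W0) + ‖W0‖ ^ 2 :=
        fun j => norm_sub_sq_real _ _
      have hcomb := ((h1.pow 2).sub (h2.const_mul 2)).add
        (tendsto_const_nhds (x := ‖W0‖ ^ 2) (f := atTop))
      rw [show ‖W0‖ ^ 2 - 2 * ‖W0‖ ^ 2 + ‖W0‖ ^ 2 = 0 by ring] at hcomb
      exact Tendsto.congr (fun j => (hid j).symm) hcomb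
    have hid2 : ∀ j, ‖Wj j - W0‖ = Real.sqrt (‖Wj j - W0‖ ^ 2) :=
      fun j => (Real.sqrt_sq (norm_nonneg _)).symm
    refine Tendsto.congr (fun j => (hid2 j).symm) ?_
    have := (Real.continuous_sqrt.tendsto' 0 0 (by simp)).comp hA2
    exact this
  -- uniform bound on ‖Vj‖ via Banach–Steinhaus
  obtain ⟨C', hC'⟩ : ∃ C', ∀ j, ‖Vj j‖ ≤ C' := by
    have hpt : ∀ f : Lp ℝ 2 (volume.restrict (layer a b 1)),
        ∃ Cf, ∀ j, ‖(innerSL ℝ (Vj j)) f‖ ≤ Cf := by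
      intro f
      set fm : Pt n → ℝ := (Lp.aestronglyMeasurable f).mk ⇑f with hfm_def
      have hfm_sm : StronglyMeasurable fm := (Lp.aestronglyMeasurable f).stronglyMeasurable_mk
      have heq : ⇑f =ᵐ[volume.restrict (layer a b 1)] fm := (Lp.aestronglyMeasurable f).ae_eq_mk
      have hmemfm : MemLp fm 2 (volume.restrict (layer a b 1)) := (Lp.memLp f).ae_eq heq
      have hconv := hvconv (fun x (_ : Pt n) => fm x) (adm fm hfm_sm.measurable hmemfm)
      have hid : ∀ j, tsInt a b (ε j) α (v j) (fun x (_ : Pt n) => fm x)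
          = (innerSL ℝ (Vj j)) f := by
        intro j
        rw [tsInt_eq j (v j) (hmemv j) fm hfm_sm.aestronglyMeasurable,
          int_mul_eq_inner (hmvt j) hmemfm, innerSL_apply_apply]
        congr 1
        rw [MemLp.toLp_congr hmemfm (Lp.memLp f) heq.symm, Lp.toLp_coeFn]
      obtain ⟨Cf, hCf⟩ := ((Tendsto.congr hid hconv).norm).bddAbove_range
      exact ⟨Cf, fun j => hCf (Set.mem_range_self j)⟩
    obtain ⟨C', hC'⟩ := banach_steinhaus hpt
    refine ⟨C', fun j => ?_⟩
    rw [← innerSL_apply_norm (𝕜 := ℝ) (Vj j)]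
    exact hC' j
  -- the split of the scaled integral
  have hsplit : ∀ j, ((ε j) ^ α)⁻¹ *
      (∫ x in layer a b ((ε j) ^ α), w j x * v j x * φ (macroMap (ε j) α x))
      = (∫ y in layer a b 1, (wt j y - w0 y) * (vt j y * φ y))
        + ∫ y in layer a b 1, w0 y * (vt j y * φ y) := by
    intro j
    have hG : AEStronglyMeasurable (fun y => wt j y * vt j y * φ y)
        (volume.restrict (layer a b 1)) :=
      ((hmwt j).aestronglyMeasurable.mul (hmvt j).aestronglyMeasurable).mul
        hφc.aestronglyMeasurable
    have h1' : ∀ x : Pt n, w j x * v j x * φ (macroMap (ε j) α x)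
        = (fun y => wt j y * vt j y * φ y) (scaleLast (ε j ^ α)⁻¹ x) := by
      intro x
      simp only
      rw [hmac j x, hwinv j x, hvinv j x]
    calc ((ε j) ^ α)⁻¹ *
        (∫ x in layer a b ((ε j) ^ α), w j x * v j x * φ (macroMap (ε j) α x))
        = ((ε j) ^ α)⁻¹ * ∫ x in layer a b ((ε j) ^ α),
            (fun y => wt j y * vt j y * φ y) (scaleLast (ε j ^ α)⁻¹ x) := by
          congr 1
          exact integral_congr_ae (Filter.Eventually.of_forall fun x => h1' x)
      _ = ∫ y in layer a b 1, wt j y * vt j y * φ y := red j _ hG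
      _ = (∫ y in layer a b 1, (wt j y - w0 y) * (vt j y * φ y))
            + ∫ y in layer a b 1, w0 y * (vt j y * φ y) := by
          rw [← integral_add
            (integrable_mul_L2 (f := fun y => wt j y - w0 y)
              (g := fun y => vt j y * φ y) ((hmwt j).sub hw0) (hvtφ j))
            (integrable_mul_L2 (f := w0) (g := fun y => vt j y * φ y) hw0 (hvtφ j))]
          exact integral_congr_ae (Filter.Eventually.of_forall fun y => by ring)
  -- the remainder tends to zero
  have hr : Tendsto (fun j => ∫ y in layer a b 1, (wt j y - w0 y) * (vt j y * φ y))
      atTop (𝓝 0) := by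
    rw [tendsto_zero_iff_norm_tendsto_zero]
    refine squeeze_zero (fun j => norm_nonneg _)
      (g := fun j => ‖Wj j - W0‖ * (C * C')) (fun j => ?_) ?_
    · have hcs := integral_CS (f := fun y => wt j y - w0 y) (g := fun y => vt j y * φ y)
        ((hmwt j).sub hw0) (hvtφ j)
      have e1 : Real.sqrt (∫ y in layer a b 1, (wt j y - w0 y) ^ 2) = ‖Wj j - W0‖ := by
        rw [← MemLp.toLp_sub (hmwt j) hw0,
          ← norm_toLp_eq_sqrt (μ := volume.restrict (layer a b 1))
            (f := fun y => wt j y - w0 y) ((hmwt j).sub hw0)]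
        rfl
      have e2 : Real.sqrt (∫ y in layer a b 1, (vt j y * φ y) ^ 2) ≤ C * C' := by
        have hle : ∀ᵐ y ∂(volume.restrict (layer a b 1)),
            (vt j y * φ y) ^ 2 ≤ C ^ 2 * (vt j y) ^ 2 := by
          filter_upwards [hmem_layer] with y hy
          have hφ2 : (φ y) ^ 2 ≤ C ^ 2 := by
            nlinarith [abs_nonneg (φ y), sq_abs (φ y), hCb y hy]
          nlinarith [sq_nonneg (vt j y)]
        have hint1 : Integrable (fun y => (vt j y * φ y) ^ 2)
            (volume.restrict (layer a b 1)) := (hvtφ j).integrable_sq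
        have hint2 : Integrable (fun y => C ^ 2 * (vt j y) ^ 2)
            (volume.restrict (layer a b 1)) := ((hmvt j).integrable_sq).const_mul _
        have hmono := integral_mono_ae hint1 hint2 hle
        rw [integral_const_mul] at hmono
        calc Real.sqrt (∫ y in layer a b 1, (vt j y * φ y) ^ 2)
            ≤ Real.sqrt (C ^ 2 * ∫ y in layer a b 1, (vt j y) ^ 2) := Real.sqrt_le_sqrt hmono
          _ = C * Real.sqrt (∫ y in layer a b 1, (vt j y) ^ 2) := by
              rw [Real.sqrt_mul (sq_nonneg C), Real.sqrt_sq hC0]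
          _ = C * ‖Vj j‖ := by rw [norm_toLp_eq_sqrt (hmvt j)]
          _ ≤ C * C' := mul_le_mul_of_nonneg_left (hC' j) hC0
      rw [Real.norm_eq_abs]
      calc |∫ y in layer a b 1, (wt j y - w0 y) * (vt j y * φ y)|
          ≤ Real.sqrt (∫ y in layer a b 1, (wt j y - w0 y) ^ 2) *
              Real.sqrt (∫ y in layer a b 1, (vt j y * φ y) ^ 2) := hcs
        _ ≤ ‖Wj j - W0‖ * (C * C') := by
            rw [e1]
            exact mul_le_mul_of_nonneg_left e2 (norm_nonneg _)
    · simpa using hA.mul_const (C * C')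
  -- the main term converges to the desired limit
  have hs : Tendsto (fun j => ∫ y in layer a b 1, w0 y * (vt j y * φ y)) atTop
      (𝓝 (∫ p in (layer a b 1) ×ˢ unitCube n, w0 p.1 * v0 p.1 p.2 * φ p.1)) := by
    have hψmem : MemLp (fun x => w0m x * φ x) 2 (volume.restrict (layer a b 1)) :=
      hmulφ w0m hmw0m
    have hψmeas : Measurable fun x => w0m x * φ x := hw0m_sm.measurable.mul hφc.measurable
    have hconv := hvconv (fun x (_ : Pt n) => w0m x * φ x) (adm _ hψmeas hψmem)
    have hid : ∀ j, tsInt a b (ε j) α (v j) (fun x (_ : Pt n) => w0m x * φ x)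
        = ∫ y in layer a b 1, w0 y * (vt j y * φ y) := by
      intro j
      rw [tsInt_eq j (v j) (hmemv j) _ hψmem.aestronglyMeasurable]
      refine integral_congr_ae ?_
      filter_upwards [hw0_ae] with y hy
      rw [← hy]
      ring
    have hlim : (∫ p in (layer a b 1) ×ˢ unitCube n,
        v0 p.1 p.2 * ((fun x (_ : Pt n) => w0m x * φ x) p.1 p.2))
        = ∫ p in (layer a b 1) ×ˢ unitCube n, w0 p.1 * v0 p.1 p.2 * φ p.1 := by
      refine integral_congr_ae ?_
      filter_upwards [hfst_ae] with p hp
      rw [hp]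
      ring
    rw [← hlim]
    exact Tendsto.congr hid hconv
  have hfinal := hr.add hs
  rw [zero_add] at hfinal
  exact Tendsto.congr (fun j => (hsplit j).symm) hfinal

end
end
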